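/- Let G be a group, α a normalized ℂ×-valued 2-cocycle on G, and N a normal subgroup of G. If the twisted group algebra ℂᵅN has an infinite-dimensional irreducible module, then the twisted group algebra ℂᵅG has an infinite-dimensional irreducible module. Equivalently: if G is α-finite (every irreducible ℂᵅG-module is finite dimensional), then N is α|_{N×N}-finite. -/

import Mathlib

universe u

/-- A normalized `ℂˣ`-valued 2-cocycle on a group `G`. -/
def IsCocycle {G : Type*} [Group G] (α : G → G → ℂˣ) : Prop :=
  (∀ x y z : G, α x y * α (x * y) z = α x (y * z) * α y z) ∧
  (∀ g : G, α 1 g = 1 ∧ α g 1 = 1)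

/-- An `α`-representation: `ρ(1) = id` and `ρ(x)ρ(y) = α(x,y) ρ(xy)`.  This is the same
datum as a module over the twisted group algebra `ℂᵅG`. -/
def IsProjRep {G V : Type*} [Group G] [AddCommGroup V] [Module ℂ V]
    (α : G → G → ℂˣ) (ρ : G → Module.End ℂ V) : Prop :=
  ρ 1 = 1 ∧ ∀ x y : G, ρ x * ρ y = ((α x y : ℂ) • ρ (x * y))

/-- Irreducibility of an `α`-representation. -/
def IsIrred {G V : Type*} [Group G] [AddCommGroup V] [Module ℂ V]
    (ρ : G → Module.End ℂ V) : Prop :=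
  (∃ v : V, v ≠ 0) ∧
  ∀ p : Submodule ℂ V, (∀ g : G, ∀ v ∈ p, ρ g v ∈ p) → p = ⊥ ∨ p = ⊤

/-!
Induce `τ` up to `G`: on `V = ⊕_{c ∈ G/N} W` the element `g` moves the summand of `c` to that of
`g • c`, acting there by `τ` of the `N`-part of `g * s_c` (for a fixed transversal `s`) times a
scalar correcting the cocycle. Irreducibility of `τ` makes `v₀ = single c w₀` (with `w₀ ≠ 0`)
generate `V`, so by Zorn a maximal invariant subspace `M` avoiding `v₀` has an irreducible quotient
`V / M`. The summand `W` of `c` meets `M` in a `τ`-invariant proper subspace, hence trivially, so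
`W` embeds into `V / M`, which is finite dimensional by hypothesis.
-/

open Finsupp

section Invariant

variable {G V : Type*} [AddCommGroup V] [Module ℂ V]

def IsRepInvariant (ρ : G → Module.End ℂ V) (p : Submodule ℂ V) : Prop :=
  ∀ g : G, ∀ v ∈ p, ρ g v ∈ p

variable {ρ : G → Module.End ℂ V}

def quotientRep (ρ : G → Module.End ℂ V) (M : Submodule ℂ V) (hM : IsRepInvariant ρ M)
    (g : G) : Module.End ℂ (V ⧸ M) :=
  M.mapQ M (ρ g) (hM g)

@[simp]
theorem quotientRep_mk {M : Submodule ℂ V} (hM : IsRepInvariant ρ M) (g : G) (v : V) :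
    quotientRep ρ M hM g (Submodule.Quotient.mk v) = Submodule.Quotient.mk (ρ g v) :=
  rfl

theorem IsProjRep.quotientRep [Group G] {α : G → G → ℂˣ} (hρ : IsProjRep α ρ)
    {M : Submodule ℂ V} (hM : IsRepInvariant ρ M) : IsProjRep α (quotientRep ρ M hM) := by
  refine ⟨Submodule.linearMap_qext _ (LinearMap.ext fun v => ?_),
    fun x y => Submodule.linearMap_qext _ (LinearMap.ext fun v => ?_)⟩
  · simp [hρ.1]
  · simpa [Submodule.Quotient.mk_smul] using
      congrArg (Submodule.Quotient.mk (p := M)) (LinearMap.congr_fun (hρ.2 x y) v)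

theorem exists_maximal_isRepInvariant_notMem {v₀ : V} (hv₀ : v₀ ≠ 0) :
    ∃ M : Submodule ℂ V, Maximal (fun p => IsRepInvariant ρ p ∧ v₀ ∉ p) M := by
  let S := {p : Submodule ℂ V | IsRepInvariant ρ p ∧ v₀ ∉ p}
  have hchain : ∀ ch ⊆ S, IsChain (· ≤ ·) ch → ∀ p ∈ ch, ∃ ub ∈ S, ∀ q ∈ ch, q ≤ ub := by
    intro ch hch hchain p hp
    have hmem {v : V} : v ∈ sSup ch ↔ ∃ q ∈ ch, v ∈ q :=
      Submodule.mem_sSup_of_directed ⟨p, hp⟩ hchain.directedOn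
    refine ⟨sSup ch, ⟨fun g v hv => ?_, fun hv => ?_⟩, fun q hq => le_sSup hq⟩
    · obtain ⟨q, hq, hvq⟩ := hmem.1 hv
      exact hmem.2 ⟨q, hq, (hch hq).1 g v hvq⟩
    · obtain ⟨q, hq, hvq⟩ := hmem.1 hv
      exact (hch hq).2 hvq
  obtain ⟨M, -, hM⟩ := zorn_le_nonempty₀ S hchain ⊥ ⟨fun g v hv => by simp_all, by simpa using hv₀⟩
  exact ⟨M, hM⟩

theorem isIrred_quotientRep_of_maximal [Group G] {v₀ : V}
    (hgen : ∀ p, IsRepInvariant ρ p → v₀ ∈ p → p = ⊤) {M : Submodule ℂ V}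
    (hM : Maximal (fun p => IsRepInvariant ρ p ∧ v₀ ∉ p) M) :
    IsIrred (quotientRep ρ M hM.prop.1) := by
  refine ⟨⟨Submodule.Quotient.mk v₀, by simpa using hM.prop.2⟩, fun p hp => ?_⟩
  have hinj := Submodule.comap_injective_of_surjective M.mkQ_surjective
  have hq : IsRepInvariant ρ (p.comap M.mkQ) := fun g v hv => hp g _ hv
  have hMq : M ≤ p.comap M.mkQ := by
    simpa using Submodule.comap_mono (f := M.mkQ) (bot_le : ⊥ ≤ p)
  by_cases hv₀ : v₀ ∈ p.comap M.mkQ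
  · exact .inr (hinj (by rw [hgen _ hq hv₀, Submodule.comap_top]))
  · exact .inl (hinj (by
      rw [Submodule.comap_bot, Submodule.ker_mkQ]
      exact (hM.le_of_ge ⟨hq, hv₀⟩ hMq).antisymm hMq))

end Invariant

section Induced

variable {G : Type*} [Group G] (H : Subgroup G)

theorem out_smul_inv_mul_mem (g : G) (c : G ⧸ H) : (g • c).out⁻¹ * (g * c.out) ∈ H := by
  rw [← QuotientGroup.eq, QuotientGroup.out_eq']
  exact (MulAction.Quotient.coe_smul_out (H := H) g c).symm

noncomputable def cosetFactor (g : G) (c : G ⧸ H) : H :=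
  ⟨_, out_smul_inv_mul_mem H g c⟩

variable {H}

theorem out_mul_cosetFactor (g : G) (c : G ⧸ H) :
    (g • c).out * cosetFactor H g c = g * c.out :=
  mul_inv_cancel_left _ _

theorem cosetFactor_mul (x y : G) (c : G ⧸ H) :
    cosetFactor H x (y • c) * cosetFactor H y c = cosetFactor H (x * y) c := by
  ext
  simp only [cosetFactor, Subgroup.coe_mul, mul_smul]
  group

theorem cosetFactor_one (c : G ⧸ H) : cosetFactor H 1 c = 1 := by
  ext
  simp [cosetFactor]

theorem out_mul_mul_out_inv_smul (c c' : G ⧸ H) (n : H) : (c'.out * n * c.out⁻¹) • c = c' := by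
  rw [← MulAction.Quotient.coe_smul_out (H := H), smul_eq_mul, inv_mul_cancel_right,
    QuotientGroup.mk_mul_of_mem _ n.2, QuotientGroup.out_eq']

theorem cosetFactor_out_mul_mul_out_inv (c c' : G ⧸ H) (n : H) :
    cosetFactor H (c'.out * n * c.out⁻¹) c = n := by
  ext
  simp only [cosetFactor, out_mul_mul_out_inv_smul]
  group

variable {α : G → G → ℂˣ}

theorem IsCocycle.val_mul (hα : IsCocycle α) (x y z : G) :
    (α x y : ℂ) * α (x * y) z = α x (y * z) * α y z := by
  exact_mod_cast congrArg Units.val (hα.1 x y z)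

/-- `e_g e_{s_c} = inducedScalar α g c • e_{s_{g • c}} e_n` in `ℂᵅG`, where `s = Quotient.out`
and `n = cosetFactor H g c`. -/
noncomputable def inducedScalar (α : G → G → ℂˣ) (g : G) (c : G ⧸ H) : ℂˣ :=
  α g c.out * (α (g • c).out (cosetFactor H g c))⁻¹

theorem inducedScalar_mul (hα : IsCocycle α) (x y : G) (c : G ⧸ H) :
    (inducedScalar α x (y • c) : ℂ) * inducedScalar α y c *
        α (cosetFactor H x (y • c)) (cosetFactor H y c) =
      α x y * inducedScalar α (x * y) c := by
  have e1 := hα.val_mul x y c.out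
  have e2 := hα.val_mul x (y • c).out (cosetFactor H y c)
  have e3 := hα.val_mul ((x * y) • c).out (cosetFactor H x (y • c)) (cosetFactor H y c)
  rw [out_mul_cosetFactor] at e2
  rw [mul_smul, out_mul_cosetFactor, ← Subgroup.coe_mul, cosetFactor_mul] at e3
  simp only [inducedScalar, mul_smul, Units.val_mul, Units.val_inv_eq_inv_val]
  field_simp
  linear_combination (-((α y c.out : ℂ) * α x (y • c).out)) * e3
    + ((α y c.out : ℂ) * α (x • y • c).out (cosetFactor H x (y • c))) * e2
    - ((α (x • y • c).out (cosetFactor H x (y • c)) : ℂ) * α (y • c).out (cosetFactor H y c)) * e1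

variable {W : Type*} [AddCommGroup W] [Module ℂ W] (τ : H → Module.End ℂ W)

noncomputable def inducedRep (α : G → G → ℂˣ) (g : G) : Module.End ℂ ((G ⧸ H) →₀ W) :=
  lsum ℂ fun c => (lsingle (g • c)).comp ((inducedScalar α g c : ℂ) • τ (cosetFactor H g c))

theorem inducedRep_single (g : G) (c : G ⧸ H) (w : W) :
    inducedRep τ α g (single c w) =
      single (g • c) ((inducedScalar α g c : ℂ) • τ (cosetFactor H g c) w) := by
  simp [inducedRep]

theorem isProjRep_inducedRep (hα : IsCocycle α)
    (hτ : IsProjRep (fun h₁ h₂ : H => α h₁ h₂) τ) : IsProjRep α (inducedRep τ α) := by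
  refine ⟨lhom_ext' fun c => LinearMap.ext fun w => ?_,
    fun x y => lhom_ext' fun c => LinearMap.ext fun w => ?_⟩
  · simp [inducedRep_single, cosetFactor_one, hτ.1, inducedScalar, (hα.2 _).1, (hα.2 _).2]
  · have hmul := LinearMap.congr_fun (hτ.2 (cosetFactor H x (y • c)) (cosetFactor H y c)) w
    simp only [Module.End.mul_apply, LinearMap.smul_apply] at hmul
    simp only [LinearMap.coe_comp, Function.comp_apply, lsingle_apply, Module.End.mul_apply,
      LinearMap.smul_apply]
    rw [inducedRep_single, inducedRep_single, inducedRep_single, map_smul, hmul, cosetFactor_mul,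
      smul_single, smul_smul, smul_smul, smul_smul, smul_smul, inducedScalar_mul hα]

variable {τ}

theorem IsRepInvariant.single_mem_of_single_mem {p : Submodule ℂ ((G ⧸ H) →₀ W)}
    (hp : IsRepInvariant (inducedRep τ α) p) {c : G ⧸ H} {w : W} (h : single c w ∈ p)
    (c' : G ⧸ H) (n : H) : single c' (τ n w) ∈ p := by
  let g := c'.out * n * c.out⁻¹
  have := p.smul_mem (inducedScalar α g c : ℂ)⁻¹ (hp g _ h)
  rwa [inducedRep_single, out_mul_mul_out_inv_smul, cosetFactor_out_mul_mul_out_inv, smul_single,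
    inv_smul_smul₀ (Units.ne_zero _)] at this

theorem IsRepInvariant.comap_lsingle {p : Submodule ℂ ((G ⧸ H) →₀ W)}
    (hp : IsRepInvariant (inducedRep τ α) p) (c : G ⧸ H) :
    IsRepInvariant τ (p.comap (lsingle c)) :=
  fun n _ hw => hp.single_mem_of_single_mem hw c n

theorem IsRepInvariant.eq_top_of_single_mem (hτ : IsProjRep (fun h₁ h₂ : H => α h₁ h₂) τ)
    (hτirr : IsIrred τ) {p : Submodule ℂ ((G ⧸ H) →₀ W)}
    (hp : IsRepInvariant (inducedRep τ α) p) {c : G ⧸ H} {w₀ : W} (hw₀ : w₀ ≠ 0)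
    (h : single c w₀ ∈ p) : p = ⊤ := by
  have hcomap : p.comap (lsingle c) = ⊤ :=
    (hτirr.2 _ (hp.comap_lsingle c)).resolve_left fun hbot => hw₀ (by
      simpa [hbot] using (show w₀ ∈ p.comap (lsingle c) from h))
  have hsingle (c' : G ⧸ H) (w : W) : single c' w ∈ p := by
    simpa [hτ.1] using hp.single_mem_of_single_mem
      (show w ∈ p.comap (lsingle c) from hcomap ▸ Submodule.mem_top) c' 1
  rw [Submodule.eq_top_iff']
  intro f
  induction f using Finsupp.induction_linear with
  | zero => exact p.zero_mem
  | add f g hf hg => exact p.add_mem hf hg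
  | single c' w => exact hsingle c' w

theorem IsRepInvariant.injective_mkQ_comp_lsingle (hτirr : IsIrred τ)
    {M : Submodule ℂ ((G ⧸ H) →₀ W)} (hM : IsRepInvariant (inducedRep τ α) M) {c : G ⧸ H}
    {w₀ : W} (h : single c w₀ ∉ M) : Function.Injective (M.mkQ ∘ₗ lsingle c) := by
  rw [← LinearMap.ker_eq_bot, LinearMap.ker_comp, Submodule.ker_mkQ]
  exact (hτirr.2 _ (hM.comap_lsingle c)).resolve_right fun htop => h (by
    simpa using (show w₀ ∈ M.comap (lsingle c) from htop ▸ Submodule.mem_top))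

end Induced

theorem stmt15_general {G : Type u} [Group G] (N : Subgroup G)
    (α : G → G → ℂˣ) (hα : IsCocycle α)
    (hGfin : ∀ (V : Type u) [AddCommGroup V] [Module ℂ V]
      (ρ : G → Module.End ℂ V), IsProjRep α ρ → IsIrred ρ → FiniteDimensional ℂ V) :
    ∀ (W : Type u) [AddCommGroup W] [Module ℂ W] (τ : N → Module.End ℂ W),
      IsProjRep (fun h₁ h₂ : N => α (h₁ : G) (h₂ : G)) τ → IsIrred τ →
        FiniteDimensional ℂ W := by
  intro W _ _ τ hτ hτirr
  obtain ⟨w₀, hw₀⟩ := hτirr.1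
  obtain ⟨M, hM⟩ := exists_maximal_isRepInvariant_notMem (ρ := inducedRep τ α)
    (single_ne_zero.2 hw₀ : single ((1 : G) : G ⧸ N) w₀ ≠ 0)
  have hirr := isIrred_quotientRep_of_maximal
    (fun p hp => hp.eq_top_of_single_mem hτ hτirr hw₀) hM
  have := hGfin _ _ ((isProjRep_inducedRep τ hα hτ).quotientRep hM.prop.1) hirr
  exact .of_injective _ (hM.prop.1.injective_mkQ_comp_lsingle hτirr hM.prop.2)

/-- If `G` is `α`-finite (all irreducible `ℂᵅG`-modules are finite dimensional), then every
normal subgroup `N` of `G` is `α|_{N×N}`-finite. -/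
theorem stmt15 {G : Type u} [Group G] (N : Subgroup G) [N.Normal]
    (α : G → G → ℂˣ) (hα : IsCocycle α)
    (hGfin : ∀ (V : Type u) [AddCommGroup V] [Module ℂ V]
      (ρ : G → Module.End ℂ V), IsProjRep α ρ → IsIrred ρ → FiniteDimensional ℂ V) :
    ∀ (W : Type u) [AddCommGroup W] [Module ℂ W] (τ : N → Module.End ℂ W),
      IsProjRep (fun h₁ h₂ : N => α (h₁ : G) (h₂ : G)) τ → IsIrred τ →
        FiniteDimensional ℂ W :=
  stmt15_general N α hα hGfin
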